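/- For any uncertainty frame F = ⟨W, μ⟩: F validates all instances of the axiom schemas KPS_m (m ∈ ℕ) if and only if μ satisfies the Kraft–Pratt–Seidenberg conditions μKPS_m for all m ∈ ℕ. -/

import Mathlib

/-- Classical propositional formulas (over `~` and `∧`). -/
inductive CPForm : Type
  | atom : ℕ → CPForm
  | neg  : CPForm → CPForm
  | and  : CPForm → CPForm → CPForm

/-- Boolean evaluation of classical formulas. -/
def cpeval (v : ℕ → Bool) : CPForm → Bool
  | .atom n => v n
  | .neg φ => !(cpeval v φ)
  | .and φ ψ => cpeval v φ && cpeval v ψ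

/-- `φ` is a classical tautology. -/
def CPTaut (φ : CPForm) : Prop := ∀ v : ℕ → Bool, cpeval v φ = true

/-- The extension `‖φ‖` of a classical formula in a model with valuation `v`. -/
def cpset {W : Type} (v : ℕ → Set W) : CPForm → Set W
  | .atom n => v n
  | .neg φ => (cpset v φ)ᶜ
  | .and φ ψ => cpset v φ ∩ cpset v ψ

/-- Defined classical implication `φ ⊃ ψ := ~(φ ∧ ~ψ)`. -/
def cpImp (φ ψ : CPForm) : CPForm := (φ.and ψ.neg).neg

/-- Defined classical disjunction `φ ∨ ψ := ~(~φ ∧ ~ψ)`. -/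
def cpOr (φ ψ : CPForm) : CPForm := ((φ.neg).and ψ.neg).neg

/-- A classical contradiction `p ∧ ~p`. -/
def cpBot : CPForm := (CPForm.atom 0).and (CPForm.atom 0).neg

/-- A classical tautology `~(p ∧ ~p)`. -/
def cpTop : CPForm := cpBot.neg

/-- Formulas of the language `L_QG`: atoms `B φ` for classical `φ`,
closed under `∧`, `∨`, `→_G`, `⤙_G`. -/
inductive QGForm : Type
  | bel   : CPForm → QGForm
  | and   : QGForm → QGForm → QGForm
  | or    : QGForm → QGForm → QGForm
  | imp   : QGForm → QGForm → QGForm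
  | coimp : QGForm → QGForm → QGForm

/-- Gödel implication on `[0,1] ⊆ ℝ`. -/
noncomputable def gimp (a b : ℝ) : ℝ := if a ≤ b then 1 else b

/-- Gödel co-implication on `[0,1] ⊆ ℝ`. -/
noncomputable def gcoimp (a b : ℝ) : ℝ := if a ≤ b then 0 else a

/-- The bi-Gödel valuation of `L_QG` formulas in a QG model given by measure `μ`
and classical valuation `v`: `e(Bφ) = μ(‖φ‖)`. -/
noncomputable def qgeval {W : Type} (μ : Set W → ℝ) (v : ℕ → Set W) : QGForm → ℝ
  | .bel φ => μ (cpset v φ)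
  | .and α β => min (qgeval μ v α) (qgeval μ v β)
  | .or α β => max (qgeval μ v α) (qgeval μ v β)
  | .imp α β => gimp (qgeval μ v α) (qgeval μ v β)
  | .coimp α β => gcoimp (qgeval μ v α) (qgeval μ v β)

/-- `μ` is an uncertainty measure on `W`: `[0,1]`-valued, monotone w.r.t. `⊆`,
and `μ(W) > μ(∅)`. -/
def IsUncertainty {W : Type} (μ : Set W → ℝ) : Prop :=
  (∀ X : Set W, μ X ∈ Set.Icc (0:ℝ) 1) ∧ Monotone μ ∧ μ ∅ < μ Set.univ

/-- `⊤_G` in `L_QG`. -/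
def qTop : QGForm := (QGForm.bel (CPForm.atom 0)).imp (QGForm.bel (CPForm.atom 0))
/-- `⊥_G` in `L_QG`. -/
def qBot : QGForm := (QGForm.bel (CPForm.atom 0)).coimp (QGForm.bel (CPForm.atom 0))
/-- Gödel negation `~_G α := α →_G ⊥_G`. -/
def qNot (α : QGForm) : QGForm := α.imp qBot
/-- `△α := (⊤_G ⤙_G α) →_G ⊥_G`. -/
def qDelta (α : QGForm) : QGForm := (qTop.coimp α).imp qBot
/-- `α ↔_G β := (α →_G β) ∧ (β →_G α)`. -/
def qIff (α β : QGForm) : QGForm := (α.imp β).and (β.imp α)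

/-- Validity of an `L_QG` formula on an uncertainty frame `⟨W, μ⟩`:
value `1` in every QG model on the frame. -/
def QGValidOnFrame {W : Type} (μ : Set W → ℝ) (α : QGForm) : Prop :=
  ∀ v : ℕ → Set W, qgeval μ v α = 1

/-- Big classical conjunction of a list of formulas. -/
def cpBigAnd : List CPForm → CPForm
  | [] => cpTop
  | φ :: l => φ.and (cpBigAnd l)

/-- Big classical disjunction of a list of formulas. -/
def cpBigOr : List CPForm → CPForm
  | [] => cpBot
  | φ :: l => cpOr φ (cpBigOr l)

/-- Big `L_QG` conjunction of a list of formulas. -/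
def qBigAnd : List QGForm → QGForm
  | [] => qTop
  | α :: l => α.and (qBigAnd l)

/-- The disjuncts of the `E_G` formula: for each pair of subsets `K, L` of indices
with `|K| = |L|`, the conjunction `⋀_{k∈K}~φ_k ∧ ⋀_{k'∉K}φ_{k'} ∧ ⋀_{l∈L}~χ_l ∧ ⋀_{l'∉L}χ_{l'}`. -/
noncomputable def EGdisjuncts {n : ℕ} (φ χ : Fin n → CPForm) : List CPForm :=
  (((Finset.univ : Finset (Fin n)).powerset ×ˢ (Finset.univ : Finset (Fin n)).powerset).filter
    (fun KL => KL.1.card = KL.2.card)).toList.map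
    (fun KL => cpBigAnd
      ((List.ofFn fun k : Fin n => if k ∈ KL.1 then (φ k).neg else φ k) ++
       (List.ofFn fun l : Fin n => if l ∈ KL.2 then (χ l).neg else χ l)))

/-- The formula `φ_1,…,φ_n E_G χ_1,…,χ_n`:
`△(B(big disjunction) ↔_G B⊤)`. -/
noncomputable def EGform {n : ℕ} (φ χ : Fin n → CPForm) : QGForm :=
  qDelta (qIff (QGForm.bel (cpBigOr (EGdisjuncts φ χ))) (QGForm.bel cpTop))

/-- An instance of the axiom schema `KPS_m`:
`(φ_0,…,φ_m E_G χ_0,…,χ_m) ∧ ⋀_{i=0}^{m-1}△(Bφ_i→_G Bχ_i) →_G △(Bχ_m→_G Bφ_m)`. -/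
noncomputable def KPSform (m : ℕ) (φ χ : Fin (m + 1) → CPForm) : QGForm :=
  ((EGform φ χ).and (qBigAnd (List.ofFn fun i : Fin m =>
      qDelta ((QGForm.bel (φ i.castSucc)).imp (QGForm.bel (χ i.castSucc)))))).imp
    (qDelta ((QGForm.bel (χ (Fin.last m))).imp (QGForm.bel (φ (Fin.last m)))))

/-- `μ` satisfies the Kraft–Pratt–Seidenberg conditions `μKPS_m` for all `m`. -/
def muKPS {W : Type} (μ : Set W → ℝ) : Prop :=
  ∀ (m : ℕ) (X Y : Fin (m + 1) → Set W),
    (∀ j : Fin m, μ (X j.castSucc) ≤ μ (Y j.castSucc)) →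
    (∀ w : W, Nat.card {i : Fin (m + 1) // w ∈ X i} = Nat.card {i : Fin (m + 1) // w ∈ Y i}) →
    μ (Y (Fin.last m)) ≤ μ (X (Fin.last m))

/-!
Under a valuation, the disjunction in `φ_0,…,φ_m E_G χ_0,…,χ_m` holds exactly at the points lying
in as many sets `‖φ_i‖` as sets `‖χ_i‖`, and every subformula of `KPS_m` other than the main
implication takes only the values `0` and `1`. So an instance of `KPS_m` holds in a model iff
`μKPS_m` holds for the extensions of its formulas, with the counting condition required only on a
set `U` with `μ U = μ W`. As atoms can denote arbitrary sets, validity gives `μKPS`.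

Conversely, add the sets `P_k = {#B - #A > k}` and `Q_k = {#A - #B > k}` (`k ≤ m`) as extra
premises; then every point lies in `max #A #B` sets on either side. `μKPS_1` applied to `W, ∅`
and `U, Uᶜ` gives `μ Uᶜ ≤ μ ∅`, and `P_k ⊆ Uᶜ`, so the new premises `μ P_k ≤ μ Q_k` hold by
monotonicity.
-/

open Finset

section Counting

variable {ι W : Type*} [Fintype ι]

open scoped Classical in
noncomputable def memCount (X : ι → Set W) (w : W) : ℕ := #{i | w ∈ X i}

open scoped Classical

theorem natCard_mem_eq_memCount (X : ι → Set W) (w : W) :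
    Nat.card {i // w ∈ X i} = memCount X w := by
  rw [Nat.card_eq_fintype_card, Fintype.card_subtype, memCount]

theorem memCount_le (X : ι → Set W) (w : W) : memCount X w ≤ Fintype.card ι :=
  card_filter_le _ _

theorem memCount_append {a b : ℕ} (X : Fin a → Set W) (Y : Fin b → Set W) (w : W) :
    memCount (Fin.append X Y) w = memCount X w + memCount Y w := by
  simp only [memCount, card_filter, Fin.sum_univ_add, Fin.append_left, Fin.append_right]

theorem memCount_snoc {n : ℕ} (X : Fin n → Set W) (Z : Set W) (w : W) :
    memCount (Fin.snoc X Z : Fin (n + 1) → Set W) w = memCount X w + if w ∈ Z then 1 else 0 := by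
  simp only [memCount, card_filter, Fin.sum_univ_castSucc, Fin.snoc_castSucc, Fin.snoc_last]

theorem memCount_eq_memCount_init_add {n : ℕ} (X : Fin (n + 1) → Set W) (w : W) :
    memCount X w = memCount (Fin.init X) w + if w ∈ X (Fin.last n) then 1 else 0 := by
  conv_lhs => rw [← Fin.snoc_init_self X]
  exact memCount_snoc _ _ w

theorem memCount_lt {n : ℕ} (d : W → ℕ) (w : W) :
    memCount (fun k : Fin n => {x | (k : ℕ) < d x}) w = min n (d w) := by
  simp only [memCount, Set.mem_ofPred_eq]
  convert Fin.card_filter_val_lt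

theorem memCount_eq_iff_exists_card_eq (X Y : ι → Set W) (w : W) :
    memCount X w = memCount Y w ↔
      ∃ K L : Finset ι, #K = #L ∧ (∀ k, w ∈ X k ↔ k ∉ K) ∧ ∀ l, w ∈ Y l ↔ l ∉ L := by
  refine ⟨fun h => ?_, ?_⟩
  · refine ⟨({i | w ∈ X i} : Finset ι)ᶜ, ({i | w ∈ Y i} : Finset ι)ᶜ, ?_, by simp, by simp⟩
    rw [card_compl, card_compl]
    exact congrArg (Fintype.card ι - ·) h
  · rintro ⟨K, L, hKL, hK, hL⟩
    have hXK : ({i | w ∈ X i} : Finset ι) = Kᶜ := by ext; simp [hK]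
    have hYL : ({i | w ∈ Y i} : Finset ι) = Lᶜ := by ext; simp [hL]
    rw [memCount, memCount, hXK, hYL, card_compl, card_compl, hKL]

end Counting

namespace muKPS

open scoped Classical

variable {W : Type} {μ : Set W → ℝ}

theorem measure_compl_le_empty (hkps : muKPS μ) {U : Set W} (hU : μ Set.univ ≤ μ U) :
    μ Uᶜ ≤ μ ∅ := by
  refine hkps 1 ![Set.univ, ∅] ![U, Uᶜ] (fun j => by simpa [Fin.fin_one_eq_zero j]) fun w => ?_
  rw [natCard_mem_eq_memCount, natCard_mem_eq_memCount, memCount, memCount, card_filter,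
    card_filter, Fin.sum_univ_two, Fin.sum_univ_two]
  by_cases hw : w ∈ U <;> simp [hw]

theorem le_of_ae_memCount_eq (hkps : muKPS μ) (hmono : Monotone μ) {m : ℕ}
    (A B : Fin (m + 1) → Set W) (hle : ∀ j : Fin m, μ (A j.castSucc) ≤ μ (B j.castSucc))
    (hae : μ Set.univ ≤ μ {w | memCount A w = memCount B w}) :
    μ (B (Fin.last m)) ≤ μ (A (Fin.last m)) := by
  set P : Fin (m + 1) → Set W := fun k => {w | (k : ℕ) < memCount B w - memCount A w}
  set Q : Fin (m + 1) → Set W := fun k => {w | (k : ℕ) < memCount A w - memCount B w}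
  have hPQ (k : Fin (m + 1)) : μ (P k) ≤ μ (Q k) :=
    calc μ (P k) ≤ μ {w | memCount A w = memCount B w}ᶜ :=
          hmono fun w hw hAB => by
            have hlt : (k : ℕ) < memCount B w - memCount A w := hw
            have heq : memCount A w = memCount B w := hAB
            omega
      _ ≤ μ ∅ := hkps.measure_compl_le_empty hae
      _ ≤ μ (Q k) := hmono (Set.empty_subset _)
  have hcount (w : W) :
      memCount (Fin.append (Fin.init A) P) w + (if w ∈ A (Fin.last m) then 1 else 0) =
        memCount (Fin.append (Fin.init B) Q) w + (if w ∈ B (Fin.last m) then 1 else 0) := by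
    have hA := memCount_le A w
    have hB := memCount_le B w
    have hA' := memCount_eq_memCount_init_add A w
    have hB' := memCount_eq_memCount_init_add B w
    rw [Fintype.card_fin] at hA hB
    rw [memCount_append, memCount_append, memCount_lt, memCount_lt]
    omega
  simpa using hkps (m + (m + 1)) (Fin.snoc (Fin.append (Fin.init A) P) (A (Fin.last m)))
    (Fin.snoc (Fin.append (Fin.init B) Q) (B (Fin.last m)))
    (fun j => by
      rw [Fin.snoc_castSucc, Fin.snoc_castSucc]
      refine Fin.addCases (fun i => ?_) (fun k => ?_) j
      · simpa [Fin.init] using hle i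
      · simpa using hPQ k)
    (fun w => by simp only [natCard_mem_eq_memCount, memCount_snoc, hcount])

end muKPS

section Semantics

variable {W : Type}

theorem cpset_cpTop (v : ℕ → Set W) : cpset v cpTop = Set.univ := by
  ext; simp [cpTop, cpBot, cpset]

theorem mem_cpset_cpBigAnd (v : ℕ → Set W) (l : List CPForm) (w : W) :
    w ∈ cpset v (cpBigAnd l) ↔ ∀ ψ ∈ l, w ∈ cpset v ψ := by
  induction l with
  | nil => simp [cpBigAnd, cpset_cpTop]
  | cons φ l ih => simp [cpBigAnd, cpset, ih]

theorem mem_cpset_cpBigOr (v : ℕ → Set W) (l : List CPForm) (w : W) :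
    w ∈ cpset v (cpBigOr l) ↔ ∃ ψ ∈ l, w ∈ cpset v ψ := by
  induction l with
  | nil => simp [cpBigOr, cpBot, cpset]
  | cons φ l ih =>
    simp only [cpBigOr, cpOr, cpset, Set.mem_compl_iff, Set.mem_inter_iff, ih,
      List.exists_mem_cons_iff, not_and_or, not_not]

theorem mem_cpset_ite_neg (v : ℕ → Set W) (φ : CPForm) (p : Prop) [Decidable p] (w : W) :
    w ∈ cpset v (if p then φ.neg else φ) ↔ (w ∈ cpset v φ ↔ ¬p) := by
  split_ifs with h <;> simp [cpset, h]

theorem cpset_cpBigOr_EGdisjuncts (v : ℕ → Set W) {n : ℕ} (φ χ : Fin n → CPForm) :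
    cpset v (cpBigOr (EGdisjuncts φ χ)) =
      {w | memCount (fun i => cpset v (φ i)) w = memCount (fun i => cpset v (χ i)) w} := by
  ext w
  rw [Set.mem_ofPred_eq, memCount_eq_iff_exists_card_eq, mem_cpset_cpBigOr]
  simp [EGdisjuncts, mem_cpset_cpBigAnd, or_imp, forall_and, mem_cpset_ite_neg]

end Semantics

section Evaluation

variable {W : Type} (μ : Set W → ℝ) (v : ℕ → Set W)

theorem one_le_gimp_iff {a b : ℝ} (ha : a ≤ 1) : 1 ≤ gimp a b ↔ a ≤ b := by
  unfold gimp
  split_ifs with h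
  · simp [h]
  · exact iff_of_false (fun hb => h (ha.trans hb)) h

theorem qgeval_qDelta (α : QGForm) :
    qgeval μ v (qDelta α) = if 1 ≤ qgeval μ v α then 1 else 0 := by
  simp only [qDelta, qTop, qBot, qgeval, gimp, gcoimp, le_refl, if_true]
  split_ifs <;> norm_num at *

theorem qgeval_qBigAnd_ofFn_qDelta {n : ℕ} (α : Fin n → QGForm) :
    qgeval μ v (qBigAnd (List.ofFn fun i => qDelta (α i))) =
      if ∀ i, 1 ≤ qgeval μ v (α i) then 1 else 0 := by
  induction n with
  | zero => simp [qBigAnd, qTop, qgeval, gimp]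
  | succ n ih =>
    simp only [List.ofFn_succ, qBigAnd, qgeval, qgeval_qDelta, ih, Fin.forall_fin_succ]
    split_ifs <;> simp_all

theorem qgeval_KPSform_eq_one_iff (hμ : ∀ X, μ X ≤ 1) (m : ℕ) (φ χ : Fin (m + 1) → CPForm) :
    qgeval μ v (KPSform m φ χ) = 1 ↔
      (μ (cpset v (cpBigOr (EGdisjuncts φ χ))) = μ Set.univ →
        (∀ j : Fin m, μ (cpset v (φ j.castSucc)) ≤ μ (cpset v (χ j.castSucc))) →
          μ (cpset v (χ (Fin.last m))) ≤ μ (cpset v (φ (Fin.last m)))) := by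
  simp only [KPSform, EGform, qIff, qgeval, qgeval_qDelta, qgeval_qBigAnd_ofFn_qDelta, le_min_iff,
    one_le_gimp_iff (hμ _), cpset_cpTop, ← le_antisymm_iff]
  split_ifs <;> simp_all [gimp]

end Evaluation

theorem exists_cpset_atom_eq {W : Type} {n : ℕ} (Z : Fin n → Set W) :
    ∃ v : ℕ → Set W, ∀ i : Fin n, cpset v (.atom i) = Z i :=
  ⟨fun k => if h : k < n then Z ⟨k, h⟩ else ∅, fun i => dif_pos i.isLt⟩

theorem KPS_correspondence_general (W : Type) (μ : Set W → ℝ)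
    (hμ : IsUncertainty μ) :
    (∀ (m : ℕ) (φ χ : Fin (m + 1) → CPForm), QGValidOnFrame μ (KPSform m φ χ)) ↔
      muKPS μ := by
  have hμ1 X : μ X ≤ 1 := (hμ.1 X).2
  constructor
  · intro hvalid m X Y hle hcount
    obtain ⟨v, hv⟩ := exists_cpset_atom_eq (Fin.append X Y)
    have hφ i : cpset v (.atom (Fin.castAdd (m + 1) i)) = X i := by rw [hv, Fin.append_left]
    have hχ i : cpset v (.atom (Fin.natAdd (m + 1) i)) = Y i := by rw [hv, Fin.append_right]
    have hKPS := (qgeval_KPSform_eq_one_iff μ v hμ1 m (fun i => .atom (Fin.castAdd (m + 1) i))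
      (fun i => .atom (Fin.natAdd (m + 1) i))).1 (hvalid m _ _ v)
    simp only [hφ, hχ, cpset_cpBigOr_EGdisjuncts] at hKPS
    refine hKPS (congrArg μ (Set.eq_univ_of_forall fun w => ?_)) hle
    simpa [natCard_mem_eq_memCount] using hcount w
  · intro hkps m φ χ v
    rw [qgeval_KPSform_eq_one_iff μ v hμ1, cpset_cpBigOr_EGdisjuncts]
    exact fun hae hle => hkps.le_of_ae_memCount_eq hμ.2.1 _ _ hle hae.ge

/-- an uncertainty frame validates all instances of the schemas
`KPS_m` (`m ∈ ℕ`) iff `μ` satisfies the Kraft–Pratt–Seidenberg conditions `μKPS_m`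
for all `m ∈ ℕ`. -/
theorem KPS_correspondence (W : Type) (_ : Nonempty W) (μ : Set W → ℝ)
    (hμ : IsUncertainty μ) :
    (∀ (m : ℕ) (φ χ : Fin (m + 1) → CPForm), QGValidOnFrame μ (KPSform m φ χ)) ↔
      muKPS μ :=
  KPS_correspondence_general W μ hμ
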